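/- Let ξ : (0,∞) → (0,1) be defined implicitly by log x = ψ(x + ξ(x)). Then lim_{x→∞} ξ(x) = 1/2. -/

import Mathlib

/-!
The remainder `r y = ψ y - log y + 1 / (2 y)` tends to `0`, because convexity of `log Γ` gives
`log (y - 1) ≤ ψ y ≤ log y`. The recurrence `ψ (y + 1) = ψ y + 1 / y` and the Taylor expansion of
`log (1 + 1 / y)` give `|r y - r (y + 1)| ≤ 3 / y² - 3 / (y + 1)²`, so both `3 / y² ± r y` decrease
along `y + ℕ` to `0`, whence `|r y| ≤ 3 / y²`. At `y = x + ξ x` the defining equation reads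
`log (1 + ξ / x) = 1 / (2 y) + O(y⁻²)`, i.e. `ξ = x / (2 (x + ξ)) + O(1 / x) = 1 / 2 + O(1 / x)`.
-/

noncomputable def digamma : ℝ → ℝ := deriv (fun y : ℝ => Real.log (Real.Gamma y))

open Real Filter Topology

lemma abs_log_one_add_sub_le {u : ℝ} (hu : |u| ≤ 1 / 2) : |log (1 + u) - u| ≤ 2 * u ^ 2 := by
  have h : |log (1 + u) - u| ≤ |u| ^ 2 / (1 - |u|) := by
    simpa [sub_eq_add_neg, add_comm] using
      abs_log_sub_add_sum_range_le (x := -u) (by rw [abs_neg]; linarith) 1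
  refine h.trans ?_
  rw [div_le_iff₀ (by linarith), sq_abs]
  nlinarith [sq_nonneg u]

lemma abs_log_one_add_sub_add_le {u : ℝ} (hu : |u| ≤ 1 / 2) :
    |log (1 + u) - u + u ^ 2 / 2| ≤ 2 * |u| ^ 3 := by
  have h : |log (1 + u) - u + u ^ 2 / 2| ≤ |u| ^ 3 / (1 - |u|) := by
    simpa [Finset.sum_range_succ, sub_eq_add_neg, add_comm, add_left_comm, add_assoc,
      one_add_one_eq_two] using
      abs_log_sub_add_sum_range_le (x := -u) (by rw [abs_neg]; linarith) 2
  refine h.trans ?_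
  rw [div_le_iff₀ (by linarith)]
  nlinarith [pow_nonneg (abs_nonneg u) 3]

lemma hasDerivAt_log_Gamma {y : ℝ} (hy : 0 < y) :
    HasDerivAt (fun t ↦ log (Gamma t)) (digamma y) y := by
  have hΓ : DifferentiableAt ℝ Gamma y :=
    differentiableAt_Gamma fun m hm ↦ by linarith [hm ▸ hy, m.cast_nonneg (α := ℝ)]
  exact (hΓ.log (Gamma_pos_of_pos hy).ne').hasDerivAt

lemma slope_log_Gamma {y : ℝ} (hy : 0 < y) : slope (log ∘ Gamma) y (y + 1) = log y := by
  rw [slope_def_field, Function.comp_apply, Function.comp_apply, Gamma_add_one hy.ne',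
    log_mul hy.ne' (Gamma_pos_of_pos hy).ne']
  ring

lemma digamma_le_log {y : ℝ} (hy : 0 < y) : digamma y ≤ log y := by
  simpa only [slope_log_Gamma hy] using convexOn_log_Gamma.le_slope_of_hasDerivAt
    (Set.mem_Ioi.2 hy) (Set.mem_Ioi.2 (by linarith)) (lt_add_one y) (hasDerivAt_log_Gamma hy)

lemma log_le_digamma_add_one {y : ℝ} (hy : 0 < y) : log y ≤ digamma (y + 1) := by
  simpa only [slope_log_Gamma hy] using convexOn_log_Gamma.slope_le_of_hasDerivAt
    (Set.mem_Ioi.2 hy) (Set.mem_Ioi.2 (by linarith)) (lt_add_one y)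
    (hasDerivAt_log_Gamma (by linarith))

lemma digamma_add_one {y : ℝ} (hy : 0 < y) : digamma (y + 1) = digamma y + y⁻¹ := by
  have hshift : (fun t ↦ log t + log (Gamma t)) =ᶠ[𝓝 y] fun t ↦ log (Gamma (t + 1)) := by
    filter_upwards [eventually_gt_nhds hy] with t ht
    rw [Gamma_add_one ht.ne', log_mul ht.ne' (Gamma_pos_of_pos ht).ne']
  have h := ((hasDerivAt_log hy.ne').add (hasDerivAt_log_Gamma hy)).congr_of_eventuallyEq
    hshift.symm
  rw [add_comm (digamma y)]
  exact ((hasDerivAt_log_Gamma (by linarith)).comp_add_const y 1).unique h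

lemma tendsto_digamma_sub_log : Tendsto (fun y ↦ digamma y - log y) atTop (𝓝 0) := by
  refine tendsto_of_tendsto_of_tendsto_of_le_of_le' (tendsto_log_comp_add_sub_log (-1))
    tendsto_const_nhds ?_ ?_
  · filter_upwards [eventually_gt_atTop 1] with y hy
    have := log_le_digamma_add_one (y := y + -1) (by linarith)
    rw [neg_add_cancel_right] at this
    linarith
  · filter_upwards [eventually_gt_atTop 0] with y hy
    linarith [digamma_le_log hy]

lemma nonneg_of_apply_add_one_le {h : ℝ → ℝ} {a y : ℝ} (hstep : ∀ t, a ≤ t → h (t + 1) ≤ h t)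
    (hlim : Tendsto h atTop (𝓝 0)) (hy : a ≤ y) : 0 ≤ h y := by
  have hdecr : ∀ n : ℕ, h (y + n) ≤ h y := by
    intro n
    induction n with
    | zero => simp
    | succ n ih =>
      rw [Nat.cast_succ, ← add_assoc]
      exact (hstep _ (by linarith [n.cast_nonneg (α := ℝ)])).trans ih
  exact le_of_tendsto (hlim.comp (tendsto_atTop_add_const_left _ y tendsto_natCast_atTop_atTop))
    (Eventually.of_forall hdecr)

noncomputable def digammaRemainder (y : ℝ) : ℝ := digamma y - log y + 1 / (2 * y)

lemma tendsto_digammaRemainder : Tendsto digammaRemainder atTop (𝓝 0) := by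
  have h := tendsto_digamma_sub_log.add
    ((tendsto_const_nhds (x := (1 : ℝ))).div_atTop (tendsto_id.const_mul_atTop two_pos))
  rwa [add_zero] at h

lemma abs_digammaRemainder_sub_add_one_le {y : ℝ} (hy : 2 ≤ y) :
    |digammaRemainder y - digammaRemainder (y + 1)| ≤ 3 / y ^ 2 - 3 / (y + 1) ^ 2 := by
  have hy0 : 0 < y := by linarith
  have hu : |y⁻¹| ≤ 1 / 2 := by
    rw [abs_of_pos (inv_pos.2 hy0), ← one_div, div_le_div_iff₀ hy0 two_pos]
    linarith
  have hE := abs_log_one_add_sub_add_le hu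
  rw [abs_of_pos (inv_pos.2 hy0)] at hE
  have hlog : log (y + 1) - log y = log (1 + y⁻¹) := by
    rw [← log_div (by linarith) hy0.ne']
    congr 1
    field_simp
  have hdiff : digammaRemainder y - digammaRemainder (y + 1)
      = (log (1 + y⁻¹) - y⁻¹ + y⁻¹ ^ 2 / 2) - 1 / (2 * y ^ 2 * (y + 1)) := by
    rw [digammaRemainder, digammaRemainder, digamma_add_one hy0, ← hlog]
    field_simp
    ring
  have hcorr : 0 ≤ 1 / (2 * y ^ 2 * (y + 1)) := by positivity
  have hgap : 3 / y ^ 2 - 3 / (y + 1) ^ 2 - (2 * y⁻¹ ^ 3 + 1 / (2 * y ^ 2 * (y + 1)))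
      = (7 * y + 4) * (y - 1) / (2 * y ^ 3 * (y + 1) ^ 2) := by
    field_simp
    ring
  have hgap_nonneg : 0 ≤ (7 * y + 4) * (y - 1) / (2 * y ^ 3 * (y + 1) ^ 2) :=
    div_nonneg (mul_nonneg (by linarith) (by linarith)) (by positivity)
  rw [hdiff, abs_le]
  rw [abs_le] at hE
  constructor <;> linarith

lemma abs_digammaRemainder_le {y : ℝ} (hy : 2 ≤ y) : |digammaRemainder y| ≤ 3 / y ^ 2 := by
  have hg : Tendsto (fun t : ℝ ↦ 3 / t ^ 2) atTop (𝓝 0) :=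
    tendsto_const_nhds.div_atTop (tendsto_pow_atTop two_ne_zero)
  have hstep t (ht : 2 ≤ t) := abs_le.1 (abs_digammaRemainder_sub_add_one_le ht)
  have hupper := nonneg_of_apply_add_one_le (h := fun t ↦ 3 / t ^ 2 - digammaRemainder t)
    (fun t ht ↦ by linarith [(hstep t ht).2]) (by simpa using hg.sub tendsto_digammaRemainder) hy
  have hlower := nonneg_of_apply_add_one_le (h := fun t ↦ 3 / t ^ 2 + digammaRemainder t)
    (fun t ht ↦ by linarith [(hstep t ht).1]) (by simpa using hg.add tendsto_digammaRemainder) hy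
  rw [abs_le]
  constructor <;> linarith

lemma abs_sub_half_le_of_log_eq_digamma {x s : ℝ} (hx : 2 ≤ x) (hs : s ∈ Set.Ioo 0 1)
    (heq : log x = digamma (x + s)) : |s - 1 / 2| ≤ 6 / x := by
  obtain ⟨hs0, hs1⟩ := hs
  have hx0 : 0 < x := by linarith
  have hy0 : 0 < x + s := by linarith
  have hu : |s / x| ≤ 1 / 2 := by
    rw [abs_of_pos (by positivity), div_le_div_iff₀ hx0 two_pos]
    linarith
  have hL := abs_log_one_add_sub_le hu
  have hR := abs_digammaRemainder_le (y := x + s) (by linarith)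
  rw [digammaRemainder, ← heq] at hR
  have hlog : log (1 + s / x) = log (x + s) - log x := by
    rw [← log_div hy0.ne' hx0.ne']
    congr 1
    field_simp
  set L := log (1 + s / x) - s / x
  set R := log x - log (x + s) + 1 / (2 * (x + s))
  have hid : s - 1 / 2 = -(x * L + x * R + s / (2 * (x + s))) := by
    simp only [L, R, hlog]
    field_simp
    ring
  have hxL : x * |L| ≤ 2 / x := by
    calc x * |L| ≤ x * (2 * (s / x) ^ 2) := by gcongr
      _ = 2 * s ^ 2 / x := by field_simp
      _ ≤ 2 / x := by gcongr; nlinarith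
  have hxR : x * |R| ≤ 3 / x := by
    calc x * |R| ≤ x * (3 / (x + s) ^ 2) := by gcongr
      _ ≤ x * (3 / x ^ 2) := by gcongr; linarith
      _ = 3 / x := by field_simp
  have hcorr : |s / (2 * (x + s))| ≤ 1 / x := by
    rw [abs_of_pos (by positivity), div_le_div_iff₀ (by positivity) hx0]
    nlinarith
  calc |s - 1 / 2| = |x * L + x * R + s / (2 * (x + s))| := by rw [hid, abs_neg]
    _ ≤ |x * L| + |x * R| + |s / (2 * (x + s))| := abs_add_three _ _ _
    _ = x * |L| + x * |R| + |s / (2 * (x + s))| := by rw [abs_mul, abs_mul, abs_of_pos hx0]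
    _ ≤ 2 / x + 3 / x + 1 / x := by gcongr
    _ = 6 / x := by ring

open Filter in
theorem xi_limit (ξ : ℝ → ℝ)
    (hξ : ∀ x : ℝ, 0 < x → ξ x ∈ Set.Ioo (0 : ℝ) 1 ∧ Real.log x = digamma (x + ξ x)) :
    Tendsto ξ atTop (nhds (1 / 2)) := by
  have hbound : ∀ᶠ x in atTop, ‖ξ x - 1 / 2‖ ≤ 6 / x := by
    filter_upwards [eventually_ge_atTop 2] with x hx
    obtain ⟨hmem, heq⟩ := hξ x (by linarith)
    exact abs_sub_half_le_of_log_eq_digamma hx hmem heq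
  rw [tendsto_iff_norm_sub_tendsto_zero]
  exact squeeze_zero' (Eventually.of_forall fun x ↦ norm_nonneg _) hbound
    (tendsto_const_nhds.div_atTop tendsto_id)
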